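/- arXiv:2511.16611 — 2 statements merged into one kernel-verified Lean document; each statement's English description precedes it below -/
import Mathlib

section
/- Every weakly contracting circular DFA is simple: its only congruences are the diagonal and the universal relation. -/
def wordAct {n : ℕ} {A : Type} (δ : Fin n → A → Fin n) (p : Fin n) (u : List A) : Fin n :=
  u.foldl δ p

noncomputable def relDist {n : ℕ} {A : Type} (δ : Fin n → A → Fin n) (a : A) (p q : Fin n) : ℕ :=
  sInf {k : ℕ | wordAct δ p (List.replicate k a) = q ∨ wordAct δ q (List.replicate k a) = p}

/-- The cyclic successor `q ↦ q + 1 (mod n)` on `Fin n`. -/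
def cyc {n : ℕ} (q : Fin n) : Fin n :=
  ⟨(q.val + 1) % n, Nat.mod_lt _ (by have := q.isLt; omega)⟩

def IsCirculating {n : ℕ} {A : Type} (δ : Fin n → A → Fin n) (a : A) : Prop :=
  ∀ q : Fin n, δ q a = cyc q

def IsContracting {n : ℕ} {A : Type} (δ : Fin n → A → Fin n) (a : A) : Prop :=
  ∀ p q : Fin n, 1 < relDist δ a p q →
    ∃ u : List A, 1 ≤ relDist δ a (wordAct δ p u) (wordAct δ q u) ∧
      relDist δ a (wordAct δ p u) (wordAct δ q u) < relDist δ a p q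

def IsWeaklyContractingPair {n : ℕ} {A : Type} (δ : Fin n → A → Fin n) (a : A) (p q : Fin n) : Prop :=
  ∀ m : ℕ, (∀ u : List A, wordAct δ p u ≠ wordAct δ q u →
      m ∣ Nat.gcd (relDist δ a (wordAct δ p u) (wordAct δ q u)) n) → m = 1

def IsWeaklyContracting {n : ℕ} {A : Type} (δ : Fin n → A → Fin n) (a : A) : Prop :=
  ∀ p q : Fin n, p ≠ q → IsWeaklyContractingPair δ a p q

def IsCongruence {n : ℕ} {A : Type} (δ : Fin n → A → Fin n) (σ : Fin n → Fin n → Prop) : Prop :=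
  Equivalence σ ∧ ∀ (p q : Fin n) (u : List A), σ p q → σ (wordAct δ p u) (wordAct δ q u)

def IsSimple {n : ℕ} {A : Type} (δ : Fin n → A → Fin n) : Prop :=
  ∀ σ : Fin n → Fin n → Prop, IsCongruence δ σ → (∀ x y, σ x y → x = y) ∨ (∀ x y, σ x y)

def IsSynchronizing {n : ℕ} {A : Type} (δ : Fin n → A → Fin n) : Prop :=
  ∃ u : List A, ∀ p q : Fin n, wordAct δ p u = wordAct δ q u

section Aux

variable {n : ℕ} {A : Type} (δ : Fin n → A → Fin n) (a : A)

lemma finCast_inj [NeZero n] {x y : Fin n} (h : ((x.val : ZMod n)) = (y.val : ZMod n)) :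
    x = y := by
  have hx := ZMod.val_cast_of_lt x.isLt
  have hy := ZMod.val_cast_of_lt y.isLt
  apply Fin.ext
  rw [← hx, ← hy, h]

lemma castSubSelf [NeZero n] (x : Fin n) : ((n - x.val : ℕ) : ZMod n) = -(x.val : ZMod n) := by
  have hxn : x.val + (n - x.val) = n := by have := x.isLt; omega
  have h : ((x.val : ℕ) : ZMod n) + ((n - x.val : ℕ) : ZMod n) = 0 := by
    rw [← Nat.cast_add, hxn, ZMod.natCast_self]
  linear_combination h

lemma wordAct_replicate (ha : IsCirculating δ a) (x : Fin n) (k : ℕ) :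
    ((wordAct δ x (List.replicate k a)).val : ZMod n) = (x.val : ZMod n) + k := by
  induction k generalizing x with
  | zero => simp [wordAct]
  | succ k ih =>
    rw [List.replicate_succ]
    have h : wordAct δ x (a :: List.replicate k a) = wordAct δ (cyc x) (List.replicate k a) := by
      simp [wordAct, ha x]
    rw [h, ih]
    show (((x.val + 1) % n : ℕ) : ZMod n) + k = _
    rw [ZMod.natCast_mod]
    push_cast
    ring

lemma exists_replicate [NeZero n] (ha : IsCirculating δ a) (x y : Fin n) :
    ∃ k : ℕ, wordAct δ x (List.replicate k a) = y := by
  refine ⟨y.val + (n - x.val), finCast_inj ?_⟩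
  rw [wordAct_replicate δ a ha]
  push_cast
  rw [castSubSelf]
  ring

end Aux

theorem stmt9 (n : ℕ) (A : Type) (δ : Fin n → A → Fin n) (a : A)
    (ha : IsCirculating δ a) (hwc : IsWeaklyContracting δ a) :
    IsSimple δ := by
  intro σ hσ
  classical
  obtain ⟨heq, hcong⟩ := hσ
  by_cases hd : ∀ x y, σ x y → x = y
  · exact Or.inl hd
  right
  push_neg at hd
  obtain ⟨p, q, hpq, hne⟩ := hd
  have hn : n ≠ 0 := fun h => by subst h; exact p.elim0
  haveI : NeZero n := ⟨hn⟩
  -- the subgroup of "congruent shifts"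
  set H : AddSubgroup (ZMod n) :=
    { carrier := {d | ∀ x y : Fin n, (x.val : ZMod n) + d = (y.val : ZMod n) → σ x y}
      zero_mem' := by
        intro x y h
        rw [add_zero] at h
        exact (finCast_inj h) ▸ heq.refl x
      add_mem' := by
        intro d e hdH heH x y hxy
        set z : Fin n := ⟨((x.val : ZMod n) + d).val, ZMod.val_lt _⟩ with hz
        have hzc : (z.val : ZMod n) = (x.val : ZMod n) + d := ZMod.natCast_rightInverse _
        have h1 : σ x z := hdH x z hzc.symm
        have h2 : σ z y := heH z y (by rw [hzc, add_assoc] at *; exact hxy)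
        exact heq.trans h1 h2
      neg_mem' := by
        intro d hdH x y hxy
        have h : (y.val : ZMod n) + d = (x.val : ZMod n) := by linear_combination -hxy
        exact heq.symm (hdH y x h) } with hH
  have memH : ∀ d : ZMod n, d ∈ H ↔
      ∀ x y : Fin n, (x.val : ZMod n) + d = (y.val : ZMod n) → σ x y := fun d => Iff.rfl
  -- key: related pairs give shifts in H
  have key : ∀ p' q' : Fin n, σ p' q' → ((q'.val : ZMod n) - (p'.val : ZMod n)) ∈ H := by
    intro p' q' h
    rw [memH]
    intro x y hxy
    obtain ⟨k, hk⟩ := exists_replicate δ a ha p' x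
    have h2 := hcong p' q' (List.replicate k a) h
    have hx : (p'.val : ZMod n) + k = (x.val : ZMod n) := by
      rw [← wordAct_replicate δ a ha, hk]
    have hy : wordAct δ q' (List.replicate k a) = y := by
      apply finCast_inj
      rw [wordAct_replicate δ a ha]
      linear_combination hx + hxy
    rw [hk, hy] at h2
    exact h2
  -- least positive natural whose cast lies in H
  have hex : ∃ k : ℕ, 0 < k ∧ (k : ZMod n) ∈ H :=
    ⟨n, Nat.pos_of_ne_zero hn, by rw [ZMod.natCast_self]; exact H.zero_mem⟩
  set g := Nat.find hex with hg
  obtain ⟨hgpos, hgH⟩ := Nat.find_spec hex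
  have hgdvd : ∀ k : ℕ, (k : ZMod n) ∈ H → g ∣ k := by
    intro k hk
    have hdecomp : g * (k / g) + k % g = k := Nat.div_add_mod k g
    have hmodH : ((k % g : ℕ) : ZMod n) ∈ H := by
      have hcast : ((k % g : ℕ) : ZMod n) = (k : ZMod n) - (k / g) • ((g : ℕ) : ZMod n) := by
        rw [nsmul_eq_mul]
        have : ((g * (k / g) + k % g : ℕ) : ZMod n) = (k : ZMod n) := by rw [hdecomp]
        push_cast at this
        linear_combination this
      rw [hcast]
      exact sub_mem hk (AddSubgroup.nsmul_mem H hgH _)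
    rcases Nat.eq_zero_or_pos (k % g) with h0 | h0
    · exact Nat.dvd_of_mod_eq_zero h0
    · exact absurd ⟨h0, hmodH⟩ (Nat.find_min hex (Nat.mod_lt k hgpos))
  have hndvd : g ∣ n := hgdvd n (by rw [ZMod.natCast_self]; exact H.zero_mem)
  -- apply weak contraction
  have hg1 : g = 1 := by
    apply hwc p q hne g
    intro u hu
    set pu := wordAct δ p u
    set qu := wordAct δ q u
    have hσu : σ pu qu := hcong p q u hpq
    have hdH : ((qu.val : ZMod n) - (pu.val : ZMod n)) ∈ H := key pu qu hσu
    set r := relDist δ a pu qu with hr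
    have hrmem : r ∈ {k : ℕ | wordAct δ pu (List.replicate k a) = qu ∨
        wordAct δ qu (List.replicate k a) = pu} := by
      obtain ⟨k, hk⟩ := exists_replicate δ a ha pu qu
      exact Nat.sInf_mem ⟨k, Or.inl hk⟩
    have hrH : ((r : ℕ) : ZMod n) ∈ H := by
      rcases hrmem with h1 | h1
      · have : (pu.val : ZMod n) + r = (qu.val : ZMod n) := by
          rw [← wordAct_replicate δ a ha, h1]
        have hr' : ((r : ℕ) : ZMod n) = (qu.val : ZMod n) - (pu.val : ZMod n) := by
          linear_combination this
        rw [hr']; exact hdH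
      · have : (qu.val : ZMod n) + r = (pu.val : ZMod n) := by
          rw [← wordAct_replicate δ a ha, h1]
        have hr' : ((r : ℕ) : ZMod n) = -((qu.val : ZMod n) - (pu.val : ZMod n)) := by
          linear_combination this
        rw [hr']; exact neg_mem hdH
    exact Nat.dvd_gcd (hgdvd r hrH) hndvd
  have h1H : ((1 : ℕ) : ZMod n) ∈ H := by rw [← hg1]; exact hgH
  have hallH : ∀ k : ℕ, ((k : ℕ) : ZMod n) ∈ H := by
    intro k
    induction k with
    | zero => exact_mod_cast H.zero_mem
    | succ k ih =>
      have : ((k + 1 : ℕ) : ZMod n) = ((k : ℕ) : ZMod n) + ((1 : ℕ) : ZMod n) := by push_cast; ring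
      rw [this]
      exact add_mem ih h1H
  intro x y
  have hmem := hallH (y.val + (n - x.val))
  rw [memH] at hmem
  apply hmem x y
  push_cast
  rw [castSubSelf]
  ring
end

section
/- Every circular synchronizing automaton with a prime number of states is simple. -/
/-
A congruence of an automaton is invariant under the letter `a`, which acts as the translation
`x ↦ x + 1` of `Fin n`; so it is a translation-invariant equivalence on the group `Fin n`. Such a
relation is `x ~ y ↔ y - x ∈ H` for the subgroup `H` of elements related to `0`, and a group of
prime order has only the subgroups `⊥` and `⊤`.
-/

section TranslationInvariant

variable {G : Type*} [AddCommGroup G] {σ : G → G → Prop}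

def AddSubgroup.ofTranslationInvariant (hσ : Equivalence σ)
    (hinv : ∀ x y t, σ x y → σ (x + t) (y + t)) : AddSubgroup G where
  carrier := {t | σ 0 t}
  zero_mem' := hσ.refl 0
  add_mem' {s t} hs ht := hσ.trans hs (by simpa [add_comm] using hinv 0 t s ht)
  neg_mem' {t} ht := hσ.symm (by simpa using hinv 0 t (-t) ht)

theorem AddSubgroup.rel_iff_sub_mem_ofTranslationInvariant (hσ : Equivalence σ)
    (hinv : ∀ x y t, σ x y → σ (x + t) (y + t)) {x y : G} :
    σ x y ↔ y - x ∈ AddSubgroup.ofTranslationInvariant hσ hinv := by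
  change σ x y ↔ σ 0 (y - x)
  constructor
  · intro h
    simpa [sub_eq_add_neg, add_comm] using hinv x y (-x) h
  · intro h
    simpa using hinv 0 (y - x) x h

theorem Equivalence.eq_or_forall_of_translationInvariant_of_prime_card
    [Fact (Nat.card G).Prime] (hσ : Equivalence σ) (hinv : ∀ x y t, σ x y → σ (x + t) (y + t)) :
    (∀ x y, σ x y → x = y) ∨ (∀ x y, σ x y) := by
  have hrel : ∀ {x y : G}, σ x y ↔ _ :=
    AddSubgroup.rel_iff_sub_mem_ofTranslationInvariant hσ hinv
  rcases (AddSubgroup.ofTranslationInvariant hσ hinv).eq_bot_or_eq_top_of_prime_card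
    with hbot | htop
  · left
    intro x y h
    simpa [hbot, sub_eq_zero, eq_comm] using hrel.1 h
  · exact Or.inr fun x y => hrel.2 (htop ▸ AddSubgroup.mem_top _)

end TranslationInvariant

open Fin.NatCast

theorem cyc_eq_add_one {n : ℕ} [NeZero n] (q : Fin n) : cyc q = q + 1 := by
  ext
  simp [cyc, Fin.val_add]

theorem wordAct_replicate_of_isCirculating {n : ℕ} [NeZero n] {A : Type}
    {δ : Fin n → A → Fin n} {a : A} (ha : IsCirculating δ a) (k : ℕ) (x : Fin n) :
    wordAct δ x (List.replicate k a) = x + k := by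
  induction k generalizing x with
  | zero => simp [wordAct]
  | succ k ih =>
    change wordAct δ (δ x a) (List.replicate k a) = _
    rw [ih, ha, cyc_eq_add_one, Nat.cast_succ, add_assoc, add_comm 1]

theorem IsCongruence.rel_add_of_isCirculating {n : ℕ} [NeZero n] {A : Type}
    {δ : Fin n → A → Fin n} {a : A} {σ : Fin n → Fin n → Prop} (hσ : IsCongruence δ σ)
    (ha : IsCirculating δ a) (x y t : Fin n) (h : σ x y) : σ (x + t) (y + t) := by
  simpa only [wordAct_replicate_of_isCirculating ha, Fin.cast_val_eq_self] using
    hσ.2 x y (List.replicate t.val a) h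

theorem stmt12_general (n : ℕ) (A : Type) (δ : Fin n → A → Fin n) (a : A)
    (ha : IsCirculating δ a) (hp : n.Prime) :
    IsSimple δ := by
  have : NeZero n := ⟨hp.ne_zero⟩
  have : Fact (Nat.card (Fin n)).Prime := ⟨by simpa using hp⟩
  intro σ hσ
  exact hσ.1.eq_or_forall_of_translationInvariant_of_prime_card (hσ.rel_add_of_isCirculating ha)

theorem stmt12 (n : ℕ) (A : Type) (δ : Fin n → A → Fin n) (a : A)
    (ha : IsCirculating δ a) (hs : IsSynchronizing δ) (hp : n.Prime) :
    IsSimple δ :=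
  stmt12_general n A δ a ha hp
end
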